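/- arXiv:2601.10256 — 3 statements merged into one kernel-verified Lean document; each statement's English description precedes it below -/
import Mathlib

section
/- For every sufficiently large n, with k = ⌈(1/6)·log₂ n⌉, the quantity 4^n·((1 − 4k/4^k)^{n/k} + (1/k)·(1 − (1 − 4k/4^k)^{n/k})) is at most 4^n · 12/log₂ n. -/
/-!
Put `x = 4k/4^k`. Since `1 - x ≤ e^{-x}`, the power `(1 - x)^{n/k}` is at most `e^{-4n/4^k}`,
and `k = ⌈log₂ n / 6⌉` forces `64^{k-1} < n`, whence `4n/4^k ≥ k` and so `e^{-4n/4^k} ≤ 1/k`.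
A quantity `f + (1 - f)/k` with `f ≤ 1/k` is at most `2/k`, and `2/k ≤ 12/log₂ n` because
`log₂ n ≤ 6k`.
-/

open Real

lemma Nat.succ_mul_four_pow_le_sixtyFour_pow (j : ℕ) : (j + 1) * 4 ^ j ≤ 64 ^ j :=
  calc (j + 1) * 4 ^ j ≤ 16 ^ j * 4 ^ j := Nat.mul_le_mul_right _ (Nat.lt_pow_self (by norm_num))
    _ = 64 ^ j := by rw [← mul_pow]; norm_num

lemma Nat.mul_four_le_four_pow {k : ℕ} (hk : 1 ≤ k) : 4 * k ≤ 4 ^ k := by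
  obtain ⟨j, rfl⟩ := Nat.exists_eq_add_of_le' hk
  rw [pow_succ, mul_comm 4]
  exact Nat.mul_le_mul_right _ (Nat.lt_pow_self (by norm_num))

lemma Nat.mul_four_pow_le_of_sixtyFour_pow_lt {k n : ℕ} (hk : 1 ≤ k) (hn : 64 ^ (k - 1) < n) :
    k * 4 ^ k ≤ 4 * n := by
  obtain ⟨j, rfl⟩ := Nat.exists_eq_add_of_le' hk
  have := Nat.succ_mul_four_pow_le_sixtyFour_pow j
  rw [Nat.add_sub_cancel] at hn
  rw [pow_succ]
  linarith

lemma Real.sixtyFour_pow_lt_of_lt_logb {j n : ℕ} (hn : 0 < n) (h : 6 * (j : ℝ) < logb 2 n) :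
    64 ^ j < n := by
  rw [lt_logb_iff_rpow_lt one_lt_two (by exact_mod_cast hn)] at h
  have h64 : (2 : ℝ) ^ (6 * (j : ℝ)) = 64 ^ j := by
    rw [show 6 * (j : ℝ) = ((6 * j : ℕ) : ℝ) by push_cast; rfl, rpow_natCast, pow_mul]
    norm_num
  exact_mod_cast h64 ▸ h

lemma Real.rpow_one_sub_le_exp_neg_mul {x t : ℝ} (hx : x ≤ 1) (ht : 0 ≤ t) :
    (1 - x) ^ t ≤ exp (-(x * t)) := by
  rw [← neg_mul, exp_mul]
  exact rpow_le_rpow (by linarith) (one_sub_le_exp_neg x) ht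

lemma Real.exp_neg_le_inv_of_le {k y : ℝ} (hk : 0 < k) (hky : k ≤ y) : exp (-y) ≤ k⁻¹ := by
  rw [exp_neg]
  exact inv_anti₀ hk (by linarith [add_one_le_exp y])

lemma one_sub_four_mul_div_four_pow_rpow_le {k n : ℕ} (hk : 1 ≤ k) (hn : k * 4 ^ k ≤ 4 * n) :
    (1 - 4 * k / 4 ^ k : ℝ) ^ ((n : ℝ) / k) ≤ 1 / k := by
  have hk0 : (0 : ℝ) < k := by exact_mod_cast hk
  have h4k : (0 : ℝ) < 4 ^ k := by positivity
  have hx : 4 * (k : ℝ) / 4 ^ k ≤ 1 := by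
    rw [div_le_one h4k]
    exact_mod_cast Nat.mul_four_le_four_pow hk
  have hexp : (k : ℝ) ≤ 4 * k / 4 ^ k * (n / k) := by
    rw [show 4 * (k : ℝ) / 4 ^ k * (n / k) = 4 * n / 4 ^ k by field_simp, le_div_iff₀ h4k]
    exact_mod_cast hn
  calc (1 - 4 * k / 4 ^ k : ℝ) ^ ((n : ℝ) / k) ≤ exp (-(4 * k / 4 ^ k * (n / k))) :=
        rpow_one_sub_le_exp_neg_mul hx (by positivity)
    _ ≤ 1 / k := one_div (k : ℝ) ▸ exp_neg_le_inv_of_le hk0 hexp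

lemma add_one_div_mul_one_sub_le {f k : ℝ} (hk : 1 ≤ k) (hf : f ≤ 1 / k) :
    f + 1 / k * (1 - f) ≤ 2 / k := by
  have h : f * (1 - 1 / k) ≤ 1 / k * (1 - 1 / k) :=
    mul_le_mul_of_nonneg_right hf (by rw [sub_nonneg, div_le_one (by linarith)]; exact hk)
  have h' : 1 / k * (1 - 1 / k) ≤ 1 / k := by
    nlinarith [show 0 < 1 / k by positivity]
  linarith [show f + 1 / k * (1 - f) = f * (1 - 1 / k) + 1 / k by ring,
    show 2 / k = 1 / k + 1 / k by ring]

theorem stmt9 :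
    ∃ N : ℕ, ∀ n : ℕ, N ≤ n → ∀ k : ℕ, k = ⌈Real.logb 2 n / 6⌉₊ →
      (4 : ℝ) ^ n * ((1 - 4 * k / 4 ^ k : ℝ) ^ ((n : ℝ) / k) +
          (1 / k) * (1 - (1 - 4 * k / 4 ^ k : ℝ) ^ ((n : ℝ) / k))) ≤
        (4 : ℝ) ^ n * 12 / Real.logb 2 n := by
  refine ⟨2, fun n hn k hk => ?_⟩
  have hL : 0 < logb 2 n := logb_pos one_lt_two (by exact_mod_cast hn)
  have hk1 : 1 ≤ k := hk ▸ Nat.one_le_ceil_iff.2 (by positivity)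
  have hLk : logb 2 n ≤ 6 * k := by
    linarith [hk ▸ Nat.le_ceil (logb 2 n / 6)]
  have hkn : 64 ^ (k - 1) < n := by
    refine sixtyFour_pow_lt_of_lt_logb (by omega) ?_
    have := Nat.ceil_lt_add_one (by positivity : 0 ≤ logb 2 n / 6)
    rw [← hk] at this
    rw [Nat.cast_sub hk1, Nat.cast_one]
    linarith
  have hk0 : (1 : ℝ) ≤ k := by exact_mod_cast hk1
  rw [mul_div_assoc ((4 : ℝ) ^ n)]
  refine mul_le_mul_of_nonneg_left ?_ (by positivity : (0 : ℝ) ≤ 4 ^ n)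
  calc _ ≤ 2 / (k : ℝ) := add_one_div_mul_one_sub_le hk0 <|
        one_sub_four_mul_div_four_pow_rpow_le hk1 (Nat.mul_four_pow_le_of_sixtyFour_pow_lt hk1 hkn)
    _ ≤ 12 / logb 2 n := by
      rw [div_le_div_iff₀ (by linarith) hL]
      linarith
end

section
/- Let 𝒞 ⊆ 𝔽₂^{ℓ×n} be such that for any two distinct X₁, X₂ ∈ 𝒞, no matrix Y ∈ 𝔽₂^{(ℓ+1)×n} is obtainable from both X₁⁺ and X₂⁺ by exactly one substitution each. Then |𝒞| ≤ ⌊2^{nℓ}/(ℓ+1)⌋. -/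
/-- The sum matrix of `X`: the rows of `X` followed by their bitwise sum. -/
def sumMatrix {ℓ n : ℕ} (X : Fin ℓ → Fin n → ZMod 2) : Fin (ℓ + 1) → Fin n → ZMod 2 :=
  Fin.snoc X (fun j => ∑ i, X i j)

/-- Flip the entry of `M` at position `(i, j)`. -/
def flipEntry {m n : ℕ} (M : Fin m → Fin n → ZMod 2) (i : Fin m) (j : Fin n) :
    Fin m → Fin n → ZMod 2 :=
  fun i' j' => if i' = i ∧ j' = j then M i' j' + 1 else M i' j'

lemma colsum_sumMatrix {ℓ n : ℕ} (X : Fin ℓ → Fin n → ZMod 2) (j : Fin n) :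
    ∑ i, sumMatrix X i j = 0 := by
  rw [Fin.sum_univ_castSucc]
  simp [sumMatrix, Fin.snoc_castSucc]
  exact CharTwo.add_self_eq_zero _

lemma colsum_flip {ℓ n : ℕ} (X : Fin ℓ → Fin n → ZMod 2) (i : Fin (ℓ+1)) (j j' : Fin n) :
    ∑ i', flipEntry (sumMatrix X) i j i' j' = if j' = j then 1 else 0 := by
  have : ∀ i', flipEntry (sumMatrix X) i j i' j'
      = sumMatrix X i' j' + (if i' = i ∧ j' = j then 1 else 0) := by
    intro i'; unfold flipEntry; split <;> simp
  simp only [this, Finset.sum_add_distrib, colsum_sumMatrix, zero_add]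
  by_cases h : j' = j <;> simp [h]

theorem stmt15 (ℓ n : ℕ) (hl : 1 ≤ ℓ) (hn : 1 ≤ n)
    (𝒞 : Finset (Fin ℓ → Fin n → ZMod 2))
    (hcode : ∀ X₁ ∈ 𝒞, ∀ X₂ ∈ 𝒞, X₁ ≠ X₂ →
      ∀ Y : Fin (ℓ + 1) → Fin n → ZMod 2,
        ¬ ((∃ i j, Y = flipEntry (sumMatrix X₁) i j) ∧ (∃ i j, Y = flipEntry (sumMatrix X₂) i j))) :
    𝒞.card ≤ 2 ^ (n * ℓ) / (ℓ + 1) := by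
  classical
  -- The injection from (codeword, flip position) into (odd column, first ℓ rows)
  set F : ((Fin ℓ → Fin n → ZMod 2) × Fin (ℓ+1) × Fin n) →
      (Fin n × (Fin ℓ → Fin n → ZMod 2)) :=
    fun p => (p.2.2, fun i' j' => flipEntry (sumMatrix p.1) p.2.1 p.2.2 i'.castSucc j') with hF
  set S : Finset ((Fin ℓ → Fin n → ZMod 2) × Fin (ℓ+1) × Fin n) :=
    𝒞 ×ˢ (Finset.univ ×ˢ Finset.univ) with hS
  have hinj : Set.InjOn F S := by
    rintro ⟨X₁, i₁, j₁⟩ h₁ ⟨X₂, i₂, j₂⟩ h₂ heq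
    simp only [hS, Finset.mem_coe, Finset.mem_product, Finset.mem_univ, and_true] at h₁ h₂
    have hj : j₁ = j₂ := congrArg Prod.fst heq
    subst hj
    have hrows := congrArg Prod.snd heq
    simp only [hF] at hrows
    -- full Y's are equal
    have hY : flipEntry (sumMatrix X₁) i₁ j₁ = flipEntry (sumMatrix X₂) i₂ j₁ := by
      funext i' j'
      refine Fin.lastCases ?_ ?_ i'
      · -- last row determined by column sums
        have h1 := colsum_flip X₁ i₁ j₁ j'
        have h2 := colsum_flip X₂ i₂ j₁ j'
        rw [Fin.sum_univ_castSucc] at h1 h2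
        have hcs : (∑ k : Fin ℓ, flipEntry (sumMatrix X₁) i₁ j₁ k.castSucc j')
            = ∑ k : Fin ℓ, flipEntry (sumMatrix X₂) i₂ j₁ k.castSucc j' := by
          apply Finset.sum_congr rfl
          intro k _
          exact congrFun (congrFun hrows k) j'
        have := h1.trans h2.symm
        rw [hcs] at this
        exact add_left_cancel this
      · intro k
        exact congrFun (congrFun hrows k) j'
    have hXeq : X₁ = X₂ := by
      by_contra hne
      exact hcode X₁ h₁ X₂ h₂ hne (flipEntry (sumMatrix X₁) i₁ j₁)
        ⟨⟨i₁, j₁, rfl⟩, ⟨i₂, j₁, hY⟩⟩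
    subst hXeq
    have hi : i₁ = i₂ := by
      by_contra hne
      have := congrFun (congrFun hY i₁) j₁
      simp [flipEntry, hne] at this
    simp [hi]
  have hcard : S.card ≤ Fintype.card (Fin n × (Fin ℓ → Fin n → ZMod 2)) := by
    have := Finset.card_le_card_of_injOn F (fun _ _ => Finset.mem_univ _) hinj
    simpa using this
  have hScard : S.card = 𝒞.card * ((ℓ+1) * n) := by
    simp [hS, Finset.card_product]
  have hT : Fintype.card (Fin n × (Fin ℓ → Fin n → ZMod 2)) = n * 2 ^ (n * ℓ) := by
    rw [Fintype.card_prod, Fintype.card_fin, Fintype.card_fun, Fintype.card_fun, ZMod.card,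
      Fintype.card_fin, Fintype.card_fin, ← pow_mul]
  rw [hScard, hT] at hcard
  have hmul : 𝒞.card * (ℓ + 1) ≤ 2 ^ (n * ℓ) := by
    have h' : (𝒞.card * (ℓ + 1)) * n ≤ 2 ^ (n * ℓ) * n := by
      calc (𝒞.card * (ℓ + 1)) * n = 𝒞.card * ((ℓ+1) * n) := by ring
        _ ≤ n * 2 ^ (n * ℓ) := hcard
        _ = 2 ^ (n * ℓ) * n := by ring
    exact Nat.le_of_mul_le_mul_right h' hn
  exact (Nat.le_div_iff_mul_le (Nat.succ_pos ℓ)).2 hmul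
end

section
/- Let 𝒞_S ⊆ 𝔽₂^ℓ be a code with minimum Hamming distance at least 3, and define 𝒞 = {X ∈ 𝔽₂^{ℓ×n} : (parity(x₁),…,parity(x_ℓ)) ∈ 𝒞_S}. Then for any two distinct X, X' ∈ 𝒞, the sum matrices X⁺, X'⁺ ∈ 𝔽₂^{(ℓ+1)×n} are at Hamming distance at least 3; hence 𝒞 corrects a single substitution in the sum channel. -/
/-- Entrywise Hamming distance between two matrices. -/
def hd {m n : ℕ} (A B : Fin m → Fin n → ZMod 2) : ℕ :=
  (Finset.univ.filter fun p : Fin m × Fin n => A p.1 p.2 ≠ B p.1 p.2).card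

open Finset

lemma Finset.exists_ne_mem_of_even_card {α : Type*} {s : Finset α} {x : α} (hx : x ∈ s)
    (hs : Even #s) : ∃ y ∈ s, y ≠ x := by
  have : 0 < #s := card_pos.mpr ⟨x, hx⟩
  exact exists_mem_ne (by rcases hs with ⟨k, hk⟩; omega) x

section EvenFibers

variable {α β : Type*} [Fintype α] [Fintype β]

lemma natCast_card_filter_ne (f g : α → ZMod 2) :
    ((#{x | f x ≠ g x} : ℕ) : ZMod 2) = ∑ x, f x - ∑ x, g x := by
  have hsub : ∀ a b : ZMod 2, a - b = if a ≠ b then 1 else 0 := by decide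
  rw [← sum_sub_distrib]
  simp only [hsub, sum_boole]

lemma even_card_filter_ne_of_sum_eq {f g : α → ZMod 2} (h : ∑ x, f x = ∑ x, g x) :
    Even #{x | f x ≠ g x} := by
  rw [← ZMod.natCast_eq_zero_iff_even, natCast_card_filter_ne, h, sub_self]

lemma four_le_card_of_even_rows_of_even_cols {P : α → β → Prop} [∀ a b, Decidable (P a b)]
    (hrow : ∀ a, Even #{b | P a b}) (hcol : ∀ b, Even #{a | P a b}) {a : α} {b : β}
    (hab : P a b) : 4 ≤ #{p : α × β | P p.1 p.2} := by
  classical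
  obtain ⟨b', hb', hb'b⟩ := exists_ne_mem_of_even_card (by simpa using hab) (hrow a)
  obtain ⟨a₁, ha₁, ha₁a⟩ := exists_ne_mem_of_even_card (by simpa using hab) (hcol b)
  obtain ⟨a₂, ha₂, ha₂a⟩ := exists_ne_mem_of_even_card (by simpa using hb') (hcol b')
  simp only [mem_filter, mem_univ, true_and] at hb' ha₁ ha₂
  have hsub : {(a, b), (a, b'), (a₁, b), (a₂, b')} ⊆ ({p : α × β | P p.1 p.2} : Finset _) := by
    intro p hp
    simp only [mem_insert, mem_singleton] at hp
    rcases hp with rfl | rfl | rfl | rfl <;> simpa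
  refine le_of_eq_of_le ?_ (card_le_card hsub)
  rw [card_insert_of_notMem, card_insert_of_notMem, card_pair] <;>
    simp [hb'b, hb'b.symm, ha₁a.symm, ha₂a.symm]

end EvenFibers

section SumMatrix

variable {ℓ n : ℕ}

@[simp]
lemma sumMatrix_castSucc (X : Fin ℓ → Fin n → ZMod 2) (i : Fin ℓ) :
    sumMatrix X i.castSucc = X i :=
  Fin.snoc_castSucc ..

@[simp]
lemma sumMatrix_last (X : Fin ℓ → Fin n → ZMod 2) :
    sumMatrix X (Fin.last ℓ) = fun j => ∑ i, X i j :=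
  Fin.snoc_last ..

lemma sum_sumMatrix_apply_eq_zero (X : Fin ℓ → Fin n → ZMod 2) (j : Fin n) :
    ∑ r, sumMatrix X r j = 0 := by
  simp [Fin.sum_univ_castSucc, CharTwo.add_self_eq_zero]

lemma sum_sumMatrix_eq_of_rowSums_eq {X X' : Fin ℓ → Fin n → ZMod 2}
    (h : (fun i => ∑ j, X i j) = fun i => ∑ j, X' i j) (r : Fin (ℓ + 1)) :
    ∑ j, sumMatrix X r j = ∑ j, sumMatrix X' r j := by
  induction r using Fin.lastCases with
  | last =>
    simp only [sumMatrix_last]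
    rw [sum_comm, sum_comm (γ := Fin n)]
    exact congrArg (∑ i, · i) h
  | cast i => simpa using congrFun h i

lemma hammingDist_rowSums_le_hd (X X' : Fin ℓ → Fin n → ZMod 2) :
    hammingDist (fun i => ∑ j, X i j) (fun i => ∑ j, X' i j) ≤ hd X X' := by
  refine (card_le_card fun i hi => ?_).trans (card_image_le (f := Prod.fst))
  obtain ⟨j, hj⟩ : ∃ j, X i j ≠ X' i j := by
    by_contra! h
    exact (mem_filter.mp hi).2 (sum_congr rfl fun j _ => h j)
  exact mem_image.mpr ⟨(i, j), by simpa using hj, rfl⟩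

lemma hd_le_hd_sumMatrix (X X' : Fin ℓ → Fin n → ZMod 2) :
    hd X X' ≤ hd (sumMatrix X) (sumMatrix X') :=
  card_le_card_of_injOn (fun p => (p.1.castSucc, p.2)) (fun p hp => by simpa using hp)
    (fun p _ q _ h => by simpa [Prod.ext_iff] using h)

lemma four_le_hd_sumMatrix_of_rowSums_eq {X X' : Fin ℓ → Fin n → ZMod 2}
    (h : (fun i => ∑ j, X i j) = fun i => ∑ j, X' i j) (hne : X ≠ X') :
    4 ≤ hd (sumMatrix X) (sumMatrix X') := by
  obtain ⟨i, j, hij⟩ : ∃ i j, X i j ≠ X' i j := by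
    by_contra! h
    exact hne (funext fun i => funext (h i))
  exact four_le_card_of_even_rows_of_even_cols
    (fun r => even_card_filter_ne_of_sum_eq (sum_sumMatrix_eq_of_rowSums_eq h r))
    (fun j => even_card_filter_ne_of_sum_eq
      (by rw [sum_sumMatrix_apply_eq_zero, sum_sumMatrix_apply_eq_zero]))
    (a := i.castSucc) (b := j) (by simpa using hij)

end SumMatrix

theorem stmt18_general (ℓ n : ℕ)
    (CS : Set (Fin ℓ → ZMod 2))
    (hdist : ∀ u ∈ CS, ∀ v ∈ CS, u ≠ v → 3 ≤ hammingDist u v)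
    (𝒞 : Set (Fin ℓ → Fin n → ZMod 2))
    (h𝒞 : 𝒞 = {X | (fun i => ∑ j, X i j) ∈ CS}) :
    ∀ X ∈ 𝒞, ∀ X' ∈ 𝒞, X ≠ X' → 3 ≤ hd (sumMatrix X) (sumMatrix X') := by
  subst h𝒞
  intro X hX X' hX' hne
  by_cases hrows : (fun i => ∑ j, X i j) = fun i => ∑ j, X' i j
  · exact (four_le_hd_sumMatrix_of_rowSums_eq hrows hne).trans' (by norm_num)
  · calc 3 ≤ hammingDist (fun i => ∑ j, X i j) (fun i => ∑ j, X' i j) := hdist _ hX _ hX' hrows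
      _ ≤ hd X X' := hammingDist_rowSums_le_hd X X'
      _ ≤ hd (sumMatrix X) (sumMatrix X') := hd_le_hd_sumMatrix X X'

theorem stmt18 (ℓ n : ℕ) (hl : 1 ≤ ℓ) (hn : 1 ≤ n)
    (CS : Set (Fin ℓ → ZMod 2))
    (hdist : ∀ u ∈ CS, ∀ v ∈ CS, u ≠ v → 3 ≤ hammingDist u v)
    (𝒞 : Set (Fin ℓ → Fin n → ZMod 2))
    (h𝒞 : 𝒞 = {X | (fun i => ∑ j, X i j) ∈ CS}) :
    ∀ X ∈ 𝒞, ∀ X' ∈ 𝒞, X ≠ X' → 3 ≤ hd (sumMatrix X) (sumMatrix X') :=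
  stmt18_general ℓ n CS hdist 𝒞 h𝒞
end
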